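/- Let (ηₙ) be a sequence of strictly positive reals with ηₙ → 0, and let (zₙ) be a sequence of nonzero complex numbers such that for every n, X_{ηₙ}(zₙ)² + zₙ·e^{−(zₙ²−1)/(4ηₙ)}·X_{ηₙ}(zₙ) − zₙ² = 0. If (zₙ) converges to z̄ ∈ ℂ and Re(z̄²) = 1, then (Re z̄)² = 1 and Im z̄ = 0. -/

import Mathlib

/-!
Multiplying the characteristic equation by `F = e^{(1-z)/(2η)}` gives
`(X F)² + z (e^{-(z²-1)/(4η)} F) (X F) - (z F)² = 0`. If `Re z̄ > 1` then, as `η → 0⁺`,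
`X F = (1+z)/2 - (1-z)/2 · e^{-z/η} → (1+z̄)/2 ≠ 0`, while `F → 0` and, because `Re(z̄²) = 1`,
`e^{-(z²-1)/(4η)} F = e^{-(z+3)(z-1)/(4η)} → 0`; so `((1+z̄)/2)² = 0`, which is absurd.
Since the equation is invariant under `z ↦ -z`, also `Re z̄ ≥ -1`, and `Re z̄² - Im z̄² = 1`
then forces `Im z̄ = 0`.
-/

open Filter

/-- `X_η(z) = ((1+z)/2)·e^{−(1−z)/(2η)} − ((1−z)/2)·e^{−(1+z)/(2η)}`. -/
noncomputable def X (η : ℝ) (z : ℂ) : ℂ :=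
  ((1 + z) / 2) * Complex.exp (-(1 - z) / (2 * (η : ℂ))) -
    ((1 - z) / 2) * Complex.exp (-(1 + z) / (2 * (η : ℂ)))

open Topology Complex

def TransformedCharEq (η : ℝ) (z : ℂ) : Prop :=
  X η z ^ 2 + z * exp (-(z ^ 2 - 1) / (4 * (η : ℂ))) * X η z - z ^ 2 = 0

lemma X_neg (η : ℝ) (z : ℂ) : X η (-z) = -X η z := by
  simp only [X, sub_neg_eq_add, ← sub_eq_add_neg]
  ring

lemma TransformedCharEq.neg {η : ℝ} {z : ℂ} (h : TransformedCharEq η z) :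
    TransformedCharEq η (-z) := by
  unfold TransformedCharEq at *
  simp only [X_neg, neg_sq]
  linear_combination h

lemma X_mul_cexp (η : ℝ) (z : ℂ) :
    X η z * exp ((1 - z) / (2 * η)) = (1 + z) / 2 - (1 - z) / 2 * exp (-z / η) := by
  have h₁ : exp (-(1 - z) / (2 * η)) * exp ((1 - z) / (2 * η)) = 1 := by
    rw [← exp_add, neg_div, neg_add_cancel, exp_zero]
  have h₂ : exp (-(1 + z) / (2 * η)) * exp ((1 - z) / (2 * η)) = exp (-z / η) := by
    rw [← exp_add]
    congr 1
    ring
  simp only [X]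
  linear_combination (1 + z) / 2 * h₁ - (1 - z) / 2 * h₂

lemma tendsto_cexp_neg_div_nhds_zero {ι : Type*} {l : Filter ι} {u : ι → ℂ} {u₀ : ℂ}
    {η : ι → ℝ} (hu : Tendsto u l (𝓝 u₀)) (hu₀ : 0 < u₀.re) (hη : Tendsto η l (𝓝[>] 0)) :
    Tendsto (fun i => exp (-u i / η i)) l (𝓝 0) := by
  rw [tendsto_exp_nhds_zero_iff]
  have hre : Tendsto (fun i => (u i).re * (η i)⁻¹) l atTop :=
    ((continuous_re.tendsto _).comp hu).pos_mul_atTop hu₀ (tendsto_inv_nhdsGT_zero.comp hη)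
  refine (tendsto_neg_atTop_atBot.comp hre).congr fun i => ?_
  rw [Function.comp_apply, neg_div, neg_re, div_ofReal_re, div_eq_mul_inv]

lemma re_le_one_of_tendsto {ι : Type*} {l : Filter ι} [l.NeBot] {η : ι → ℝ}
    (hη : Tendsto η l (𝓝[>] 0)) {z : ι → ℂ} (heq : ∀ᶠ i in l, TransformedCharEq (η i) (z i))
    {zbar : ℂ} (hlim : Tendsto z l (𝓝 zbar)) (hre : (zbar ^ 2).re = 1) :
    zbar.re ≤ 1 := by
  by_contra! hone
  set F : ι → ℂ := fun i => exp ((1 - z i) / (2 * η i))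
  set E : ι → ℂ := fun i => exp (-(z i ^ 2 - 1) / (4 * (η i : ℂ)))
  set w : ι → ℂ := fun i => X (η i) (z i) * F i
  have hF : Tendsto F l (𝓝 0) := by
    refine (tendsto_cexp_neg_div_nhds_zero ((hlim.sub_const 1).div_const 2) ?_ hη).congr
      fun i => ?_
    · rw [div_ofNat_re, sub_re, one_re]
      linarith
    · simp only [F]
      congr 1
      ring
  have hw : Tendsto w l (𝓝 ((1 + zbar) / 2)) := by
    have hexp := tendsto_cexp_neg_div_nhds_zero hlim (by linarith) hη
    simpa [w, F, X_mul_cexp] using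
      ((hlim.const_add 1).div_const 2).sub (((hlim.const_sub 1).div_const 2).mul hexp)
  have hEF : Tendsto (fun i => E i * F i) l (𝓝 0) := by
    refine (tendsto_cexp_neg_div_nhds_zero
      (((hlim.add_const 3).mul (hlim.sub_const 1)).div_const 4) ?_ hη).congr fun i => ?_
    · rw [pow_two, mul_re] at hre
      rw [div_ofNat_re, mul_re, add_re, sub_re, add_im, sub_im, one_re, one_im, re_ofNat,
        im_ofNat]
      nlinarith
    · simp only [E, F]
      rw [← exp_add]
      congr 1
      ring
  have hscaled : ∀ᶠ i in l, w i ^ 2 + z i * (E i * F i) * w i - (z i * F i) ^ 2 = 0 := by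
    filter_upwards [heq] with i hi
    unfold TransformedCharEq at hi
    linear_combination F i ^ 2 * hi
  have hlim_scaled : Tendsto (fun i => w i ^ 2 + z i * (E i * F i) * w i - (z i * F i) ^ 2) l
      (𝓝 (((1 + zbar) / 2) ^ 2)) := by
    simpa using ((hw.pow 2).add ((hlim.mul hEF).mul hw)).sub ((hlim.mul hF).pow 2)
  have hsq : ((1 + zbar) / 2) ^ 2 = 0 :=
    tendsto_nhds_unique (hlim_scaled.congr' hscaled) tendsto_const_nhds
  have hre_zero := congrArg re (pow_eq_zero_iff two_ne_zero |>.mp hsq)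
  rw [div_ofNat_re, add_re, one_re, zero_re] at hre_zero
  linarith

theorem stmt_3_general (η : ℕ → ℝ) (hηpos : ∀ n, 0 < η n)
    (hη0 : Tendsto η atTop (nhds 0))
    (z : ℕ → ℂ)
    (heq : ∀ n, X (η n) (z n) ^ 2 +
      z n * Complex.exp (-((z n) ^ 2 - 1) / (4 * (η n : ℂ))) * X (η n) (z n) -
      (z n) ^ 2 = 0)
    (zbar : ℂ) (hlim : Tendsto z atTop (nhds zbar))
    (hre : (zbar ^ 2).re = 1) :
    zbar.re ^ 2 = 1 ∧ zbar.im = 0 := by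
  have hη : Tendsto η atTop (𝓝[>] 0) := tendsto_nhdsWithin_iff.mpr ⟨hη0, .of_forall hηpos⟩
  have hre_le : zbar.re ≤ 1 := re_le_one_of_tendsto hη (.of_forall heq) hlim hre
  have hneg_re_le : (-zbar).re ≤ 1 :=
    re_le_one_of_tendsto hη (.of_forall fun n => TransformedCharEq.neg (heq n)) hlim.neg
      (by rwa [neg_sq])
  have hsq : zbar.re ^ 2 - zbar.im ^ 2 = 1 := by
    rw [pow_two, mul_re] at hre
    linear_combination hre
  rw [neg_re] at hneg_re_le
  have him : zbar.im = 0 := by nlinarith [sq_nonneg zbar.im]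
  exact ⟨by linear_combination hsq + zbar.im * him, him⟩

theorem stmt_3 (η : ℕ → ℝ) (hηpos : ∀ n, 0 < η n)
    (hη0 : Tendsto η atTop (nhds 0))
    (z : ℕ → ℂ) (hz : ∀ n, z n ≠ 0)
    (heq : ∀ n, X (η n) (z n) ^ 2 +
      z n * Complex.exp (-((z n) ^ 2 - 1) / (4 * (η n : ℂ))) * X (η n) (z n) -
      (z n) ^ 2 = 0)
    (zbar : ℂ) (hlim : Tendsto z atTop (nhds zbar))
    (hre : (zbar ^ 2).re = 1) :
    zbar.re ^ 2 = 1 ∧ zbar.im = 0 :=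
  stmt_3_general η hηpos hη0 z heq zbar hlim hre
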